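/- arXiv:2107.05585 — 4 statements merged into one kernel-verified Lean document; each statement's English description precedes it below -/
import Mathlib

section
/- Let ‖·‖ be a norm on ℝ^d, let f : ℝ^d → ℝ be Lipschitz with respect to ‖·‖, and suppose f is subdifferentiable at w ∈ ℝ^d. Then the regular subdifferential satisfies ∂f(w) = {g ∈ ℝ^d : ⟨g, e⟩ ≤ f′(w; e) for all e ∈ ℝ^d}, where f′(w; e) = liminf_{ε → 0⁺, c → e} (f(w + εc) − f(w))/ε is the lower directional derivative of f at w in direction e. -/
open Set Filter

/-- `Nm` is a norm on `ℝ^d`. -/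
def IsNorm {d : ℕ} (Nm : EuclideanSpace ℝ (Fin d) → ℝ) : Prop :=
  (∀ x, Nm x = 0 ↔ x = 0) ∧ (∀ (a : ℝ) (x), Nm (a • x) = |a| * Nm x) ∧
    ∀ x y, Nm (x + y) ≤ Nm x + Nm y

/-- The regular subdifferential of `f` at `w` w.r.t. the norm `Nm`. -/
noncomputable def RegSubdiff {d : ℕ} (Nm : EuclideanSpace ℝ (Fin d) → ℝ)
    (f : EuclideanSpace ℝ (Fin d) → ℝ) (w : EuclideanSpace ℝ (Fin d)) :
    Set (EuclideanSpace ℝ (Fin d)) :=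
  {g | 0 ≤ liminf (fun v => (f v - f w - (inner ℝ g (v - w) : ℝ)) / Nm (v - w))
        (nhdsWithin w {w}ᶜ)}

/-- The lower directional derivative
`f′(w; e) = liminf_{ε → 0⁺, c → e} (f(w + εc) − f(w))/ε`. -/
noncomputable def dirDeriv {d : ℕ} (f : EuclideanSpace ℝ (Fin d) → ℝ)
    (w e : EuclideanSpace ℝ (Fin d)) : ℝ :=
  liminf (fun p : ℝ × EuclideanSpace ℝ (Fin d) => (f (w + p.1 • p.2) - f w) / p.1)
    (nhdsWithin (0 : ℝ) (Ioi 0) ×ˢ nhds e)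

/-!
Write `Q g v = (f v - f w - ⟪g, v - w⟫) / Nm (v - w)` (`regSubdiffQuot`) and
`q (ε, c) = (f (w + ε • c) - f w) / ε` (`dirDerivQuot`). For `ε > 0` they are linked by
`q (ε, c) = Q g (w + ε • c) * Nm c + ⟪g, c⟫`. Lipschitz continuity and the equivalence of `Nm` with
the Euclidean norm keep both quotients bounded, so each liminf inequality becomes an eventual lower
bound. A bound `Q g ≥ -δ` near `w` then gives `q ≥ ⟪g, e⟫ - η` near `(0⁺, e)`. Conversely, the
bounds `q (ε, c) - ⟪g, c⟫ ≥ y` near each `(0⁺, e)` are uniform on the compact sphere `{Nm = 1}`,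
and writing `v = w + Nm (v - w) • c` with `Nm c = 1` turns them into `Q g v ≥ y`.
-/

open scoped Topology RealInnerProductSpace

theorem le_liminf_iff_of_eventually_abs_le {α : Type*} {l : Filter α} [l.NeBot] {u : α → ℝ}
    {b : ℝ} (hb : ∀ᶠ x in l, |u x| ≤ b) {a : ℝ} :
    a ≤ liminf u l ↔ ∀ y < a, ∀ᶠ x in l, y ≤ u x :=
  le_liminf_iff' (isCoboundedUnder_ge_of_eventually_le l (hb.mono fun _ => le_of_abs_le))
    (isBoundedUnder_of_eventually_ge (hb.mono fun _ => neg_le_of_abs_le))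

namespace IsNorm

variable {d : ℕ} {Nm : EuclideanSpace ℝ (Fin d) → ℝ}

theorem map_zero (hNm : IsNorm Nm) : Nm 0 = 0 := (hNm.1 0).2 rfl

theorem map_smul_of_nonneg (hNm : IsNorm Nm) {a : ℝ} (ha : 0 ≤ a)
    (x : EuclideanSpace ℝ (Fin d)) : Nm (a • x) = a * Nm x := by
  rw [hNm.2.1, abs_of_nonneg ha]

theorem nonneg (hNm : IsNorm Nm) (x : EuclideanSpace ℝ (Fin d)) : 0 ≤ Nm x := by
  have h := hNm.2.2 x (-x)
  have hneg : Nm (-x) = Nm x := by simpa using hNm.2.1 (-1) x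
  rw [add_neg_cancel, hNm.map_zero, hneg] at h
  linarith

theorem pos (hNm : IsNorm Nm) {x : EuclideanSpace ℝ (Fin d)} (hx : x ≠ 0) : 0 < Nm x :=
  (hNm.nonneg x).lt_of_ne fun h => hx ((hNm.1 x).1 h.symm)

theorem continuous (hNm : IsNorm Nm) : Continuous Nm := by
  rw [← continuousOn_univ]
  exact (Seminorm.of Nm hNm.2.2 hNm.2.1).convexOn.continuousOn isOpen_univ

theorem exists_norm_le_mul (hNm : IsNorm Nm) :
    ∃ C, ∀ x : EuclideanSpace ℝ (Fin d), ‖x‖ ≤ C * Nm x := by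
  have hcont : ContinuousOn (fun x => (Nm x)⁻¹) (Metric.sphere 0 1) :=
    hNm.continuous.continuousOn.inv₀ fun x hx =>
      (hNm.pos (ne_zero_of_mem_unit_sphere ⟨x, hx⟩)).ne'
  obtain ⟨C, hC⟩ := (isCompact_sphere (0 : EuclideanSpace ℝ (Fin d)) 1).bddAbove_image hcont
  refine ⟨C, fun x => ?_⟩
  rcases eq_or_ne x 0 with rfl | hx
  · simp [hNm.map_zero]
  have hx' : 0 < ‖x‖ := norm_pos_iff.2 hx
  have hu : ‖x‖⁻¹ • x ∈ Metric.sphere 0 1 := by simp [norm_smul, hx'.ne']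
  have hNu : Nm x = ‖x‖ * Nm (‖x‖⁻¹ • x) := by
    rw [hNm.map_smul_of_nonneg (inv_nonneg.2 hx'.le), ← mul_assoc, mul_inv_cancel₀ hx'.ne',
      one_mul]
  have hpos := hNm.pos (ne_zero_of_mem_unit_sphere ⟨_, hu⟩)
  have hC₁ : 1 ≤ C * Nm (‖x‖⁻¹ • x) := (inv_le_iff_one_le_mul₀ hpos).1 (hC ⟨_, hu, rfl⟩)
  calc ‖x‖ = ‖x‖ * 1 := (mul_one _).symm
    _ ≤ ‖x‖ * (C * Nm (‖x‖⁻¹ • x)) := by gcongr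
    _ = C * Nm x := by rw [hNu]; ring

theorem isCompact_setOf_eq_one (hNm : IsNorm Nm) :
    IsCompact {x : EuclideanSpace ℝ (Fin d) | Nm x = 1} := by
  obtain ⟨C, hC⟩ := hNm.exists_norm_le_mul
  refine Metric.isCompact_of_isClosed_isBounded (isClosed_eq hNm.continuous continuous_const) ?_
  refine (Metric.isBounded_closedBall (x := 0) (r := C)).subset fun x hx => ?_
  simpa [hx.out] using hC x

end IsNorm

section

variable {d : ℕ}

noncomputable def regSubdiffQuot (Nm f : EuclideanSpace ℝ (Fin d) → ℝ)
    (w g v : EuclideanSpace ℝ (Fin d)) : ℝ :=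
  (f v - f w - ⟪g, v - w⟫) / Nm (v - w)

noncomputable def dirDerivQuot (f : EuclideanSpace ℝ (Fin d) → ℝ) (w : EuclideanSpace ℝ (Fin d))
    (p : ℝ × EuclideanSpace ℝ (Fin d)) : ℝ :=
  (f (w + p.1 • p.2) - f w) / p.1

variable {Nm f : EuclideanSpace ℝ (Fin d) → ℝ} {w g : EuclideanSpace ℝ (Fin d)} {L C : ℝ}

theorem regSubdiffQuot_self : regSubdiffQuot Nm f w g w = 0 := by
  simp [regSubdiffQuot]

theorem dirDerivQuot_eq_regSubdiffQuot_mul_add (hNm : IsNorm Nm) {ε : ℝ} (hε : 0 < ε)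
    (c : EuclideanSpace ℝ (Fin d)) :
    dirDerivQuot f w (ε, c) = regSubdiffQuot Nm f w g (w + ε • c) * Nm c + ⟪g, c⟫ := by
  rcases eq_or_ne c 0 with rfl | hc
  · simp [dirDerivQuot, hNm.map_zero]
  have hNc := (hNm.pos hc).ne'
  rw [dirDerivQuot, regSubdiffQuot, add_sub_cancel_left, hNm.map_smul_of_nonneg hε.le,
    real_inner_smul_right]
  field_simp
  ring

theorem abs_dirDerivQuot_le (hNm : IsNorm Nm) (hlip : ∀ v u, |f v - f u| ≤ L * Nm (v - u))
    {ε : ℝ} (hε : 0 < ε) (c : EuclideanSpace ℝ (Fin d)) :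
    |dirDerivQuot f w (ε, c)| ≤ L * Nm c := by
  have h := hlip (w + ε • c) w
  rw [add_sub_cancel_left, hNm.map_smul_of_nonneg hε.le, mul_left_comm] at h
  rwa [dirDerivQuot, abs_div, abs_of_pos hε, div_le_iff₀' hε]

theorem abs_regSubdiffQuot_le (hNm : IsNorm Nm) (hlip : ∀ v u, |f v - f u| ≤ L * Nm (v - u))
    (hC : ∀ x, ‖x‖ ≤ C * Nm x) {v : EuclideanSpace ℝ (Fin d)} (hv : v ≠ w) :
    |regSubdiffQuot Nm f w g v| ≤ L + ‖g‖ * C := by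
  have hpos := hNm.pos (sub_ne_zero.2 hv)
  rw [regSubdiffQuot, abs_div, abs_of_pos hpos, div_le_iff₀ hpos]
  calc |f v - f w - ⟪g, v - w⟫| ≤ |f v - f w| + |⟪g, v - w⟫| := abs_sub _ _
    _ ≤ L * Nm (v - w) + ‖g‖ * (C * Nm (v - w)) := by
      gcongr
      · exact hlip v w
      · exact (abs_real_inner_le_norm g _).trans (by gcongr; exact hC _)
    _ = (L + ‖g‖ * C) * Nm (v - w) := by ring

theorem mem_regSubdiff_iff (hNm : IsNorm Nm) (hlip : ∀ v u, |f v - f u| ≤ L * Nm (v - u))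
    (hC : ∀ x, ‖x‖ ≤ C * Nm x) :
    g ∈ RegSubdiff Nm f w ↔ ∀ y < 0, ∀ᶠ v in 𝓝[≠] w, y ≤ regSubdiffQuot Nm f w g v := by
  change 0 ≤ liminf (regSubdiffQuot Nm f w g) (𝓝[≠] w) ↔ _
  rcases (𝓝[≠] w).eq_or_neBot with hbot | _
  · -- `d = 0`: the liminf over `⊥` is the junk value `sSup univ = 0`
    simp [hbot, liminf_eq]
  · exact le_liminf_iff_of_eventually_abs_le (l := 𝓝[≠] w)
      (eventually_mem_nhdsWithin.mono fun v hv => abs_regSubdiffQuot_le hNm hlip hC hv)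

theorem le_dirDeriv_iff (hNm : IsNorm Nm) (hlip : ∀ v u, |f v - f u| ≤ L * Nm (v - u))
    {a : ℝ} {e : EuclideanSpace ℝ (Fin d)} :
    a ≤ dirDeriv f w e ↔ ∀ y < a, ∀ᶠ p in 𝓝[>] (0 : ℝ) ×ˢ 𝓝 e, y ≤ dirDerivQuot f w p := by
  refine le_liminf_iff_of_eventually_abs_le (b := |L| * (Nm e + 1)) ?_
  have hN : ∀ᶠ p in 𝓝[>] (0 : ℝ) ×ˢ 𝓝 e, Nm p.2 < Nm e + 1 :=
    ((hNm.continuous.tendsto e).comp tendsto_snd).eventually_lt_const (lt_add_one _)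
  filter_upwards [hN, eventually_mem_nhdsWithin.prod_inl _] with p hN hε
  calc |dirDerivQuot f w (p.1, p.2)| ≤ L * Nm p.2 := abs_dirDerivQuot_le hNm hlip hε p.2
    _ ≤ |L| * (Nm e + 1) := mul_le_mul (le_abs_self L) hN.le (hNm.nonneg _) (abs_nonneg L)

theorem inner_le_dirDeriv_of_mem_regSubdiff (hNm : IsNorm Nm)
    (hlip : ∀ v u, |f v - f u| ≤ L * Nm (v - u)) (hC : ∀ x, ‖x‖ ≤ C * Nm x)
    (hg : g ∈ RegSubdiff Nm f w) (e : EuclideanSpace ℝ (Fin d)) : ⟪g, e⟫ ≤ dirDeriv f w e := by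
  rw [le_dirDeriv_iff hNm hlip]
  intro y hy
  have hNe := hNm.nonneg e
  set δ := (⟪g, e⟫ - y) / (2 * (Nm e + 1)) with hδ_def
  have hδ : 0 < δ := div_pos (by linarith) (by linarith)
  -- `regSubdiffQuot` vanishes at `w` (`0 / 0 = 0`), so the bound extends to all of `𝓝 w`
  have hQ : ∀ᶠ v in 𝓝 w, -δ ≤ regSubdiffQuot Nm f w g v := by
    rw [← nhdsNE_sup_pure, eventually_sup, eventually_pure, regSubdiffQuot_self]
    exact ⟨(mem_regSubdiff_iff hNm hlip hC).1 hg _ (neg_lt_zero.2 hδ), by linarith⟩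
  have hmove : Tendsto (fun p : ℝ × EuclideanSpace ℝ (Fin d) => w + p.1 • p.2)
      (𝓝[>] (0 : ℝ) ×ˢ 𝓝 e) (𝓝 w) := by
    have h := (continuous_const.add (continuous_fst.smul continuous_snd)).tendsto
      ((0 : ℝ), e) (f := fun p : ℝ × EuclideanSpace ℝ (Fin d) => w + p.1 • p.2)
    rw [zero_smul, add_zero, nhds_prod_eq] at h
    exact h.mono_left (prod_mono nhdsWithin_le_nhds le_rfl)
  have hsnd : Tendsto Prod.snd (𝓝[>] (0 : ℝ) ×ˢ 𝓝 e) (𝓝 e) := tendsto_snd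
  filter_upwards [hmove.eventually hQ,
    ((hNm.continuous.tendsto e).comp hsnd).eventually_lt_const (lt_add_one (Nm e)),
    (tendsto_const_nhds.inner hsnd).eventually_const_lt
      (show ⟪g, e⟫ - (⟪g, e⟫ - y) / 2 < ⟪g, e⟫ by linarith),
    eventually_mem_nhdsWithin.prod_inl _] with p hQ hN hI hε
  rw [dirDerivQuot_eq_regSubdiffQuot_mul_add (g := g) hNm hε p.2]
  have h₁ : -δ * Nm p.2 ≤ regSubdiffQuot Nm f w g (w + p.1 • p.2) * Nm p.2 :=
    mul_le_mul_of_nonneg_right hQ (hNm.nonneg _)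
  have h₂ : δ * Nm p.2 ≤ δ * (Nm e + 1) := mul_le_mul_of_nonneg_left hN.le hδ.le
  have h₃ : δ * (Nm e + 1) = (⟪g, e⟫ - y) / 2 := by
    rw [hδ_def]; field_simp
  linarith

theorem mem_regSubdiff_of_forall_inner_le_dirDeriv (hNm : IsNorm Nm)
    (hlip : ∀ v u, |f v - f u| ≤ L * Nm (v - u)) (hC : ∀ x, ‖x‖ ≤ C * Nm x)
    (hg : ∀ e, ⟪g, e⟫ ≤ dirDeriv f w e) : g ∈ RegSubdiff Nm f w := by
  rw [mem_regSubdiff_iff hNm hlip hC]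
  intro y hy
  have hloc : ∀ e ∈ {c | Nm c = 1},
      ∀ᶠ p in 𝓝[>] (0 : ℝ) ×ˢ 𝓝 e, y ≤ dirDerivQuot f w p - ⟪g, p.2⟫ := by
    intro e _
    have hq := (le_dirDeriv_iff hNm hlip).1 (hg e) (⟪g, e⟫ + y / 2) (by linarith)
    have hI : ∀ᶠ p in 𝓝[>] (0 : ℝ) ×ˢ 𝓝 e, ⟪g, p.2⟫ < ⟪g, e⟫ - y / 2 :=
      (tendsto_const_nhds.inner tendsto_snd).eventually_lt_const (by linarith)
    filter_upwards [hq, hI] with p hq hI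
    linarith
  have hunif : ∀ᶠ ε in 𝓝[>] (0 : ℝ), ∀ c ∈ {c | Nm c = 1},
      y ≤ dirDerivQuot f w (ε, c) - ⟪g, c⟫ := by
    have h : ∀ᶠ p in 𝓝[>] (0 : ℝ) ×ˢ 𝓝ˢ {c | Nm c = 1}, y ≤ dirDerivQuot f w p - ⟪g, p.2⟫ :=
      hNm.isCompact_setOf_eq_one.mem_prod_nhdsSet_of_forall hloc
    exact h.curry.mono fun _ h => h.self_of_nhdsSet
  have hdist : Tendsto (fun v => Nm (v - w)) (𝓝[≠] w) (𝓝[>] 0) := by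
    refine tendsto_nhdsWithin_iff.2
      ⟨?_, eventually_mem_nhdsWithin.mono fun v hv => hNm.pos (sub_ne_zero.2 hv)⟩
    have h := (hNm.continuous.comp (continuous_id.sub continuous_const)).tendsto w
      (f := fun v => Nm (v - w))
    rw [sub_self, hNm.map_zero] at h
    exact h.mono_left nhdsWithin_le_nhds
  filter_upwards [hdist.eventually (hunif.and eventually_mem_nhdsWithin)] with v ⟨hv, hε⟩
  have hε : 0 < Nm (v - w) := hε
  have hc : Nm ((Nm (v - w))⁻¹ • (v - w)) = 1 := by
    rw [hNm.map_smul_of_nonneg (inv_nonneg.2 hε.le), inv_mul_cancel₀ hε.ne']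
  have h := hv _ hc
  rwa [dirDerivQuot_eq_regSubdiffQuot_mul_add hNm hε, hc, mul_one, smul_smul,
    mul_inv_cancel₀ hε.ne', one_smul, add_sub_cancel, add_sub_cancel_right] at h

end

theorem stmt_7_general (d : ℕ) (Nm : EuclideanSpace ℝ (Fin d) → ℝ) (hNm : IsNorm Nm)
    (f : EuclideanSpace ℝ (Fin d) → ℝ) (L₀ : ℝ)
    (hlip : ∀ v w, |f v - f w| ≤ L₀ * Nm (v - w))
    (w : EuclideanSpace ℝ (Fin d)) :
    RegSubdiff Nm f w = {g | ∀ e, (inner ℝ g e : ℝ) ≤ dirDeriv f w e} := by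
  obtain ⟨C, hC⟩ := hNm.exists_norm_le_mul
  ext g
  exact ⟨fun hg e => inner_le_dirDeriv_of_mem_regSubdiff hNm hlip hC hg e,
    mem_regSubdiff_of_forall_inner_le_dirDeriv hNm hlip hC⟩

/-- For a Lipschitz function which is subdifferentiable at `w`, the regular subdifferential
is exactly the set of `g` with `⟨g, e⟩ ≤ f′(w; e)` for all directions `e`. -/
theorem stmt_7 (d : ℕ) (Nm : EuclideanSpace ℝ (Fin d) → ℝ) (hNm : IsNorm Nm)
    (f : EuclideanSpace ℝ (Fin d) → ℝ) (L₀ : ℝ)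
    (hlip : ∀ v w, |f v - f w| ≤ L₀ * Nm (v - w))
    (w : EuclideanSpace ℝ (Fin d)) (hsub : (RegSubdiff Nm f w).Nonempty) :
    RegSubdiff Nm f w = {g | ∀ e, (inner ℝ g e : ℝ) ≤ dirDeriv f w e} :=
  stmt_7_general d Nm hNm f L₀ hlip w
end

section
/- Let t ≥ 1 be an integer, C ≥ 0, and let γ₀, γ₁, …, γ_t be nonnegative reals satisfying γ_j ≤ (1 − 1/√(j+1))² · γ_{j−1} + C for every 1 ≤ j ≤ t. Then γ_t ≤ γ₀ · (1 − 1/√(t+1))^{2t} + C·√(t+1). -/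
/-- Unravelling the variance recursion: if `γ_j ≤ (1 − 1/√(j+1))² γ_{j−1} + C` for
`1 ≤ j ≤ t`, with all `γ_j ≥ 0` and `C ≥ 0`, then
`γ_t ≤ γ_0 (1 − 1/√(t+1))^{2t} + C √(t+1)`. -/
theorem stmt_12 (t : ℕ) (ht : 1 ≤ t) (C : ℝ) (hC : 0 ≤ C) (γ : ℕ → ℝ)
    (hpos : ∀ j ≤ t, 0 ≤ γ j)
    (hrec : ∀ j, 1 ≤ j → j ≤ t →
      γ j ≤ (1 - 1 / Real.sqrt ((j : ℝ) + 1)) ^ 2 * γ (j - 1) + C) :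
    γ t ≤ γ 0 * (1 - 1 / Real.sqrt ((t : ℝ) + 1)) ^ (2 * t) + C * Real.sqrt ((t : ℝ) + 1) := by
  set S : ℝ := Real.sqrt ((t : ℝ) + 1) with hS
  have ht0 : (0:ℝ) ≤ (t : ℝ) := Nat.cast_nonneg t
  have hS1 : 1 ≤ S := by
    have := Real.sqrt_le_sqrt (show (1:ℝ) ≤ (t:ℝ)+1 by linarith)
    simpa [hS] using this
  have hSpos : 0 < S := lt_of_lt_of_le one_pos hS1
  set s : ℝ := 1 / S with hs
  have hspos : 0 < s := by positivity
  have hs1 : s ≤ 1 := by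
    rw [hs]
    exact div_le_one_of_le₀ hS1 hSpos.le
  set r : ℝ := (1 - s) ^ 2 with hr
  have hr0 : 0 ≤ r := sq_nonneg _
  have hr1 : r ≤ 1 - s := by
    rw [hr, sq]
    nlinarith
  -- monotonicity: for j ≤ t, the ratio is ≤ r
  have hmono : ∀ j ≤ t, (1 - 1 / Real.sqrt ((j : ℝ) + 1)) ^ 2 ≤ r := by
    intro j hj
    have hj0 : (0:ℝ) ≤ (j : ℝ) := Nat.cast_nonneg j
    have h1 : (1:ℝ) ≤ Real.sqrt ((j : ℝ) + 1) := by
      have := Real.sqrt_le_sqrt (show (1:ℝ) ≤ (j:ℝ)+1 by linarith)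
      simpa using this
    have h2 : Real.sqrt ((j : ℝ) + 1) ≤ S := by
      rw [hS]
      apply Real.sqrt_le_sqrt
      have : (j : ℝ) ≤ (t : ℝ) := by exact_mod_cast hj
      linarith
    have hnn : 0 ≤ 1 - 1 / Real.sqrt ((j : ℝ) + 1) := by
      have : 1 / Real.sqrt ((j : ℝ) + 1) ≤ 1 := by
        apply div_le_one_of_le₀ h1; linarith
      linarith
    have hle : 1 - 1 / Real.sqrt ((j : ℝ) + 1) ≤ 1 - s := by
      have : s ≤ 1 / Real.sqrt ((j : ℝ) + 1) := by
        rw [hs]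
        apply one_div_le_one_div_of_le (by linarith) h2
      linarith
    rw [hr]
    exact pow_le_pow_left₀ hnn hle 2
  -- main induction
  have key : ∀ k ≤ t, γ k ≤ γ 0 * r ^ k + C * ∑ i ∈ Finset.range k, r ^ i := by
    intro k
    induction k with
    | zero => intro _; simp
    | succ n ih =>
      intro hn
      have hnt : n ≤ t := Nat.le_of_succ_le hn
      have h1 := hrec (n + 1) (Nat.le_add_left 1 n) hn
      simp only [Nat.add_sub_cancel] at h1
      have h2 : (1 - 1 / Real.sqrt (((n + 1 : ℕ) : ℝ) + 1)) ^ 2 * γ n ≤ r * γ n := by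
        apply mul_le_mul_of_nonneg_right (hmono (n + 1) hn) (hpos n hnt)
      have h3 : r * γ n ≤ r * (γ 0 * r ^ n + C * ∑ i ∈ Finset.range n, r ^ i) :=
        mul_le_mul_of_nonneg_left (ih hnt) hr0
      have h4 : ∑ i ∈ Finset.range (n + 1), r ^ i
          = r * ∑ i ∈ Finset.range n, r ^ i + 1 := geom_sum_succ
      have heq : r * (γ 0 * r ^ n + C * ∑ i ∈ Finset.range n, r ^ i) + C
          = γ 0 * r ^ (n + 1) + C * (r * ∑ i ∈ Finset.range n, r ^ i + 1) := by ring
      rw [h4]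
      linarith
  have hmain := key t le_rfl
  -- bound the geometric sum by S
  have hsum : ∑ i ∈ Finset.range t, r ^ i ≤ S := by
    have hgs : (1 - r) * ∑ i ∈ Finset.range t, r ^ i = 1 - r ^ t := by
      linear_combination -geom_sum_mul r t
    have hrt : 0 ≤ r ^ t := pow_nonneg hr0 t
    have hsum_nonneg : 0 ≤ ∑ i ∈ Finset.range t, r ^ i :=
      Finset.sum_nonneg fun i _ => pow_nonneg hr0 i
    have h5 : s * ∑ i ∈ Finset.range t, r ^ i ≤ 1 := by
      have : s * ∑ i ∈ Finset.range t, r ^ i ≤ (1 - r) * ∑ i ∈ Finset.range t, r ^ i := by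
        apply mul_le_mul_of_nonneg_right _ hsum_nonneg
        linarith
      linarith
    have hSs : s * S = 1 := by
      rw [hs]; field_simp
    exact le_of_mul_le_mul_left (by linarith : s * ∑ i ∈ Finset.range t, r ^ i ≤ s * S) hspos
  have hrpow : r ^ t = (1 - s) ^ (2 * t) := by
    rw [hr, ← pow_mul]
  calc γ t ≤ γ 0 * r ^ t + C * ∑ i ∈ Finset.range t, r ^ i := hmain
    _ ≤ γ 0 * (1 - 1 / S) ^ (2 * t) + C * S := by
        rw [← hs, ← hrpow]
        have := mul_le_mul_of_nonneg_left hsum hC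
        linarith
end

section
/- Let ‖·‖₊ be a norm on ℝ^d such that the function N(x) = ‖x‖₊² is differentiable and satisfies N(x + y) ≤ N(x) + ⟨∇N(x), y⟩ + κ₊·N(y) for all x, y ∈ ℝ^d, for some constant κ₊ ≥ 1. Let X₁, …, X_n be independent random vectors in ℝ^d with E[X_i] = 0 and E[‖X_i‖₊²] < ∞ for each i. Then E[‖Σ_{i=1}^n X_i‖₊²] ≤ κ₊ · Σ_{i=1}^n E[‖X_i‖₊²]. -/
open MeasureTheory ProbabilityTheory InnerProductSpace

theorem measurable_gradient {E : Type*} [NormedAddCommGroup E] [InnerProductSpace ℝ E]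
    [CompleteSpace E] [MeasurableSpace E] [BorelSpace E] (f : E → ℝ) :
    Measurable (gradient f) := by
  let : MeasurableSpace (StrongDual ℝ E) := borel _
  have : BorelSpace (StrongDual ℝ E) := ⟨rfl⟩
  exact (toDual ℝ E).symm.continuous.measurable.comp (measurable_fderiv ℝ f)

theorem integrable_of_forall_integrable_inner {Ω E : Type*} [MeasurableSpace Ω] {μ : Measure Ω}
    [NormedAddCommGroup E] [InnerProductSpace ℝ E] [FiniteDimensional ℝ E] {G : Ω → E}
    (hG : ∀ v, Integrable (fun ω => ⟪v, G ω⟫_ℝ) μ) : Integrable G μ := by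
  let b := stdOrthonormalBasis ℝ E
  have hrepr : G = fun ω => ∑ i, ⟪b i, G ω⟫_ℝ • b i := funext fun ω => (b.sum_repr' (G ω)).symm
  rw [hrepr]
  exact integrable_finsetSum _ fun i _ => (hG (b i)).smul_const (b i)

section SmoothSquaredNorm

variable {E : Type*} [NormedAddCommGroup E] [InnerProductSpace ℝ E] {N : E → ℝ} {g : E → E}
  {κ : ℝ}

theorem abs_inner_le_of_smooth (hN : ∀ x, 0 ≤ N x) (hN_neg : ∀ x, N (-x) = N x)
    (hsmooth : ∀ x y, N (x + y) ≤ N x + ⟪g x, y⟫_ℝ + κ * N y) (x y : E) :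
    |⟪g x, y⟫_ℝ| ≤ N x + κ * N y := by
  have h_add := hsmooth x y
  have h_sub := hsmooth x (-y)
  rw [inner_neg_right, hN_neg] at h_sub
  rw [abs_le]
  constructor <;> linarith [hN (x + y), hN (x + -y)]

variable [FiniteDimensional ℝ E] [MeasurableSpace E] [BorelSpace E]
  {Ω : Type*} [MeasurableSpace Ω] {μ : Measure Ω} [IsFiniteMeasure μ]

theorem integrable_and_integral_add_le_of_smooth (hN : ∀ x, 0 ≤ N x)
    (hN_neg : ∀ x, N (-x) = N x) (hgrad : ∀ x, HasGradientAt N (g x) x)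
    (hsmooth : ∀ x y, N (x + y) ≤ N x + ⟪g x, y⟫_ℝ + κ * N y)
    {S Y : Ω → E} (hS : Measurable S) (hY : Integrable Y μ) (hY_mean : ∫ ω, Y ω ∂μ = 0)
    (hSY : IndepFun S Y μ) (hNS : Integrable (fun ω => N (S ω)) μ)
    (hNY : Integrable (fun ω => N (Y ω)) μ) :
    Integrable (fun ω => N (S ω + Y ω)) μ ∧
      ∫ ω, N (S ω + Y ω) ∂μ ≤ ∫ ω, N (S ω) ∂μ + κ * ∫ ω, N (Y ω) ∂μ := by
  have hg : g = gradient N := funext fun x => (hgrad x).gradient.symm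
  have hN_cont : Continuous N := continuous_iff_continuousAt.2 fun x =>
    (hgrad x).differentiableAt.continuousAt
  have hg_meas : Measurable g := hg ▸ measurable_gradient N
  have hgS_meas : Measurable fun ω => g (S ω) := hg_meas.comp hS
  have hgS : Integrable (fun ω => g (S ω)) μ := by
    refine integrable_of_forall_integrable_inner fun v => ?_
    refine (hNS.add (integrable_const (κ * N v))).mono'
      (hgS_meas.const_inner.aestronglyMeasurable) (Filter.Eventually.of_forall fun ω => ?_)
    rw [Real.norm_eq_abs, real_inner_comm]
    exact abs_inner_le_of_smooth hN hN_neg hsmooth (S ω) v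
  have hgSY : IndepFun (fun ω => g (S ω)) Y μ := hSY.comp hg_meas measurable_id
  have hcross : Integrable (fun ω => ⟪g (S ω), Y ω⟫_ℝ) μ := hgSY.integrable_bilin hgS hY (innerSL ℝ)
  have hcross_zero : ∫ ω, ⟪g (S ω), Y ω⟫_ℝ ∂μ = 0 := by
    rw [← inner_zero_right (∫ ω, g (S ω) ∂μ), ← hY_mean]
    exact hgSY.integral_bilin hgS hY (innerSL ℝ)
  have hbound : Integrable (fun ω => N (S ω) + ⟪g (S ω), Y ω⟫_ℝ + κ * N (Y ω)) μ :=
    (hNS.add hcross).add (hNY.const_mul κ)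
  have hNSY : Integrable (fun ω => N (S ω + Y ω)) μ := by
    refine hbound.mono'
      (hN_cont.comp_aestronglyMeasurable (hS.aestronglyMeasurable.add hY.aestronglyMeasurable))
      (Filter.Eventually.of_forall fun ω => ?_)
    rw [Real.norm_of_nonneg (hN _)]
    exact hsmooth (S ω) (Y ω)
  refine ⟨hNSY, ?_⟩
  calc ∫ ω, N (S ω + Y ω) ∂μ
      ≤ ∫ ω, (N (S ω) + ⟪g (S ω), Y ω⟫_ℝ + κ * N (Y ω)) ∂μ :=
        integral_mono hNSY hbound fun ω => hsmooth (S ω) (Y ω)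
    _ = ∫ ω, N (S ω) ∂μ + κ * ∫ ω, N (Y ω) ∂μ := by
        rw [integral_add (f := fun ω => N (S ω) + ⟪g (S ω), Y ω⟫_ℝ) (hNS.add hcross)
          (hNY.const_mul κ), integral_add hNS hcross,
          hcross_zero, integral_const_mul, add_zero]

theorem integrable_and_integral_sum_le_of_smooth (hN0 : N 0 = 0) (hN : ∀ x, 0 ≤ N x)
    (hN_neg : ∀ x, N (-x) = N x) (hgrad : ∀ x, HasGradientAt N (g x) x)
    (hsmooth : ∀ x y, N (x + y) ≤ N x + ⟪g x, y⟫_ℝ + κ * N y)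
    {ι : Type*} {X : ι → Ω → E} (hmeas : ∀ i, Measurable (X i)) (hindep : iIndepFun X μ)
    (hint : ∀ i, Integrable (X i) μ) (hmean : ∀ i, ∫ ω, X i ω ∂μ = 0)
    (hNX : ∀ i, Integrable (fun ω => N (X i ω)) μ) (s : Finset ι) :
    Integrable (fun ω => N (∑ i ∈ s, X i ω)) μ ∧
      ∫ ω, N (∑ i ∈ s, X i ω) ∂μ ≤ κ * ∑ i ∈ s, ∫ ω, N (X i ω) ∂μ := by
  classical
  induction s using Finset.cons_induction with
  | empty => simp [hN0]
  | cons a s ha ih =>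
    have hSX : IndepFun (fun ω => ∑ i ∈ s, X i ω) (X a) μ := by
      simpa only [Finset.sum_fn] using hindep.indepFun_finsetSum_of_notMem hmeas ha
    obtain ⟨hint_sum, hle⟩ := integrable_and_integral_add_le_of_smooth hN hN_neg hgrad hsmooth
      (Finset.measurable_sum s fun i _ => hmeas i) (hint a) (hmean a) hSX ih.1 (hNX a)
    simp only [Finset.sum_cons, add_comm (X a _)]
    exact ⟨hint_sum, by linarith [ih.2]⟩

end SmoothSquaredNorm

theorem stmt_15_general (d n : ℕ) (Nm : EuclideanSpace ℝ (Fin d) → ℝ) (hNm : IsNorm Nm)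
    (κ : ℝ)
    (gN : EuclideanSpace ℝ (Fin d) → EuclideanSpace ℝ (Fin d))
    (hdiff : ∀ x, HasGradientAt (fun z => Nm z ^ 2) (gN x) x)
    (hsmooth : ∀ x y, Nm (x + y) ^ 2 ≤ Nm x ^ 2 + (inner ℝ (gN x) y : ℝ) + κ * Nm y ^ 2)
    (Ω : Type) [MeasurableSpace Ω] (μ : Measure Ω) [IsProbabilityMeasure μ]
    (X : Fin n → Ω → EuclideanSpace ℝ (Fin d))
    (hmeas : ∀ i, Measurable (X i))
    (hindep : ProbabilityTheory.iIndepFun X μ)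
    (hint : ∀ i, Integrable (X i) μ)
    (hmean : ∀ i, ∫ ω, X i ω ∂μ = 0)
    (hL2 : ∀ i, Integrable (fun ω => Nm (X i ω) ^ 2) μ) :
    ∫ ω, Nm (∑ i, X i ω) ^ 2 ∂μ ≤ κ * ∑ i, ∫ ω, Nm (X i ω) ^ 2 ∂μ := by
  obtain ⟨hNm_zero, hNm_smul, -⟩ := hNm
  have hN_neg (x : EuclideanSpace ℝ (Fin d)) : Nm (-x) ^ 2 = Nm x ^ 2 := by
    simpa using congrArg (· ^ 2) (hNm_smul (-1) x)
  exact (integrable_and_integral_sum_le_of_smooth (by simp [(hNm_zero 0).2 rfl])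
    (fun x => sq_nonneg (Nm x)) hN_neg hdiff hsmooth hmeas hindep hint hmean hL2 _).2

/-- If the squared norm `N = ‖·‖₊²` is differentiable with gradient `gN` and satisfies the
`κ₊`-smoothness inequality `N(x+y) ≤ N(x) + ⟨∇N(x), y⟩ + κ₊ N(y)`, then for independent,
mean-zero, square-integrable random vectors `X₁, …, X_n`,
`E[‖Σᵢ Xᵢ‖₊²] ≤ κ₊ Σᵢ E[‖Xᵢ‖₊²]`. -/
theorem stmt_15 (d n : ℕ) (Nm : EuclideanSpace ℝ (Fin d) → ℝ) (hNm : IsNorm Nm)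
    (κ : ℝ) (hκ : 1 ≤ κ)
    (gN : EuclideanSpace ℝ (Fin d) → EuclideanSpace ℝ (Fin d))
    (hdiff : ∀ x, HasGradientAt (fun z => Nm z ^ 2) (gN x) x)
    (hsmooth : ∀ x y, Nm (x + y) ^ 2 ≤ Nm x ^ 2 + (inner ℝ (gN x) y : ℝ) + κ * Nm y ^ 2)
    (Ω : Type) [MeasurableSpace Ω] (μ : Measure Ω) [IsProbabilityMeasure μ]
    (X : Fin n → Ω → EuclideanSpace ℝ (Fin d))
    (hmeas : ∀ i, Measurable (X i))
    (hindep : ProbabilityTheory.iIndepFun X μ)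
    (hint : ∀ i, Integrable (X i) μ)
    (hmean : ∀ i, ∫ ω, X i ω ∂μ = 0)
    (hL2 : ∀ i, Integrable (fun ω => Nm (X i ω) ^ 2) μ) :
    ∫ ω, Nm (∑ i, X i ω) ^ 2 ∂μ ≤ κ * ∑ i, ∫ ω, Nm (X i ω) ^ 2 ∂μ :=
  stmt_15_general d n Nm hNm κ gN hdiff hsmooth Ω μ X hmeas hindep hint hmean hL2
end

section
/- Let ‖·‖ be a norm on ℝ^d, let L₀, L₁, D ≥ 0, b > 0, and let t ≥ 1 be an integer. Given vectors ∇₀ ∈ ℝ^d and Δ_k, g_k ∈ ℝ^d for k = 1, …, t, define recursively ∇_k = (1 − 1/√(k+1))(∇_{k−1} + Δ_k) + (1/√(k+1))·g_k. Let ∇₀′, Δ_k′, g_k′ be another family of inputs with the same recursion producing ∇_k′. Suppose there is an index k₀ ∈ {0, 1, …, t} such that the two families of inputs agree everywhere except possibly at index k₀, where ‖∇₀ − ∇₀′‖ ≤ L₀/b (if k₀ = 0), and ‖Δ_{k₀} − Δ_{k₀}′‖ ≤ L₁D√(k₀+1)/b and ‖g_{k₀} − g_{k₀}′‖ ≤ L₀(k₀+1)/b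 (if k₀ ≥ 1). Then ‖∇_t − ∇_t′‖ ≤ (L₀ + L₁D)·√(t+1)/b. -/
open Set

/-- Sensitivity of the recursive gradient estimator
`∇_k = (1 − 1/√(k+1)) (∇_{k−1} + Δ_k) + (1/√(k+1)) g_k`: if two families of inputs agree
except possibly at one index `k₀`, where the discrepancies are bounded as stated, then
`‖∇_t − ∇_t′‖ ≤ (L₀ + L₁ D) √(t+1) / b`. -/
theorem stmt_17 (d : ℕ) (Nm : EuclideanSpace ℝ (Fin d) → ℝ) (hNm : IsNorm Nm)
    (L₀ L₁ D : ℝ) (hL₀ : 0 ≤ L₀) (hL₁ : 0 ≤ L₁) (hD : 0 ≤ D) (b : ℝ) (hb : 0 < b)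
    (t : ℕ) (ht : 1 ≤ t)
    (Δ g Δ' g' nab nab' : ℕ → EuclideanSpace ℝ (Fin d))
    (hrec : ∀ k, 1 ≤ k → k ≤ t →
      nab k = (1 - 1 / Real.sqrt ((k : ℝ) + 1)) • (nab (k - 1) + Δ k)
        + (1 / Real.sqrt ((k : ℝ) + 1)) • g k)
    (hrec' : ∀ k, 1 ≤ k → k ≤ t →
      nab' k = (1 - 1 / Real.sqrt ((k : ℝ) + 1)) • (nab' (k - 1) + Δ' k)
        + (1 / Real.sqrt ((k : ℝ) + 1)) • g' k)
    (k₀ : ℕ) (hk₀ : k₀ ≤ t)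
    (hagree0 : k₀ ≠ 0 → nab 0 = nab' 0)
    (hagree : ∀ k, 1 ≤ k → k ≤ t → k ≠ k₀ → Δ k = Δ' k ∧ g k = g' k)
    (hdiff0 : k₀ = 0 → Nm (nab 0 - nab' 0) ≤ L₀ / b)
    (hdiffΔ : 1 ≤ k₀ → Nm (Δ k₀ - Δ' k₀) ≤ L₁ * D * Real.sqrt ((k₀ : ℝ) + 1) / b)
    (hdiffg : 1 ≤ k₀ → Nm (g k₀ - g' k₀) ≤ L₀ * ((k₀ : ℝ) + 1) / b) :
    Nm (nab t - nab' t) ≤ (L₀ + L₁ * D) * Real.sqrt ((t : ℝ) + 1) / b := by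
  obtain ⟨hz, hsm, htri⟩ := hNm
  have h0 : Nm 0 = 0 := (hz 0).mpr rfl
  have hnn : ∀ x, 0 ≤ Nm x := by
    intro x
    have h1 := htri x (-x)
    have h2 : Nm (-x) = Nm x := by simpa using hsm (-1) x
    simp only [add_neg_cancel, h0] at h1
    linarith
  -- sqrt facts
  have hs1 : ∀ k : ℕ, 1 ≤ Real.sqrt ((k : ℝ) + 1) := by
    intro k
    calc (1 : ℝ) = Real.sqrt 1 := Real.sqrt_one.symm
      _ ≤ Real.sqrt ((k : ℝ) + 1) :=
          Real.sqrt_le_sqrt (by have := Nat.cast_nonneg (α := ℝ) k; linarith)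
  set C : ℝ := (L₀ + L₁ * D) * Real.sqrt ((k₀ : ℝ) + 1) / b with hC
  have hCnn : 0 ≤ C := by
    apply div_nonneg _ hb.le
    exact mul_nonneg (add_nonneg hL₀ (mul_nonneg hL₁ hD)) (Real.sqrt_nonneg _)
  -- agreement before k₀
  have hpre : ∀ k, k < k₀ → nab k = nab' k := by
    intro k hk
    induction k with
    | zero => exact hagree0 (by omega)
    | succ n ih =>
      have h1 : 1 ≤ n + 1 := by omega
      have h2 : n + 1 ≤ t := by omega
      obtain ⟨hΔ, hg⟩ := hagree (n + 1) h1 h2 (by omega)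
      rw [hrec (n + 1) h1 h2, hrec' (n + 1) h1 h2]
      simp only [Nat.add_sub_cancel]
      rw [ih (by omega), hΔ, hg]
  -- main induction from k₀
  have main : ∀ k, k₀ ≤ k → k ≤ t → Nm (nab k - nab' k) ≤ C := by
    intro k hk hkt
    induction k with
    | zero =>
      have hk0 : k₀ = 0 := by omega
      calc Nm (nab 0 - nab' 0) ≤ L₀ / b := hdiff0 hk0
        _ ≤ C := by
          rw [hC, hk0]
          simp only [Nat.cast_zero, zero_add, Real.sqrt_one, mul_one]
          rw [div_le_div_iff₀ hb hb]
          nlinarith [mul_nonneg (mul_nonneg hL₁ hD) hb.le]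
    | succ n ih =>
      have h1 : 1 ≤ n + 1 := by omega
      have h2 : n + 1 ≤ t := hkt
      set c : ℝ := 1 / Real.sqrt (((n : ℕ) + 1 : ℕ) + 1) with hc
      have hs := hs1 (n + 1)
      have hspos : (0 : ℝ) < Real.sqrt (((n : ℕ) + 1 : ℕ) + 1) :=
        lt_of_lt_of_le one_pos hs
      have hcpos : 0 < c := by positivity
      have hcle : c ≤ 1 := by
        rw [hc, div_le_one hspos]; exact hs
      rcases Nat.lt_or_ge n.succ k₀ with hlt | hge
      · exact absurd hk (by omega)
      rcases Nat.eq_or_lt_of_le hge with heq | hgt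
      · -- n+1 = k₀ : the base discrepancy step
        have hk1 : 1 ≤ k₀ := by omega
        have heq' : k₀ = n + 1 := by omega
        have hprev : nab n = nab' n := hpre n (by omega)
        have hrw : nab (n + 1) - nab' (n + 1)
            = (1 - c) • (Δ (n + 1) - Δ' (n + 1)) + c • (g (n + 1) - g' (n + 1)) := by
          rw [hrec (n + 1) h1 h2, hrec' (n + 1) h1 h2]
          simp only [Nat.add_sub_cancel]
          rw [hprev, hc]
          push_cast
          module
        have hbnd := htri ((1 - c) • (Δ (n + 1) - Δ' (n + 1))) (c • (g (n + 1) - g' (n + 1)))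
        rw [hrw]
        have e1 : Nm ((1 - c) • (Δ (n + 1) - Δ' (n + 1))) = (1 - c) * Nm (Δ (n + 1) - Δ' (n + 1)) := by
          rw [hsm]; rw [abs_of_nonneg (by linarith)]
        have e2 : Nm (c • (g (n + 1) - g' (n + 1))) = c * Nm (g (n + 1) - g' (n + 1)) := by
          rw [hsm]; rw [abs_of_nonneg hcpos.le]
        have hΔb : Nm (Δ (n + 1) - Δ' (n + 1)) ≤ L₁ * D * Real.sqrt ((k₀ : ℝ) + 1) / b := by
          have h := hdiffΔ hk1
          rw [show Δ k₀ = Δ (n + 1) by rw [heq'], show Δ' k₀ = Δ' (n + 1) by rw [heq']] at h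
          exact h
        have hgb : Nm (g (n + 1) - g' (n + 1)) ≤ L₀ * ((k₀ : ℝ) + 1) / b := by
          have h := hdiffg hk1
          rw [show g k₀ = g (n + 1) by rw [heq'], show g' k₀ = g' (n + 1) by rw [heq']] at h
          exact h
        have hck : c * ((k₀ : ℝ) + 1) = Real.sqrt ((k₀ : ℝ) + 1) := by
          rw [hc, show ((k₀ : ℕ) : ℝ) = (((n + 1 : ℕ)) : ℝ) by rw [heq']]
          rw [div_mul_eq_mul_div, one_mul, Real.div_sqrt]
        have hΔnn := hnn (Δ (n + 1) - Δ' (n + 1))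
        have hgnn := hnn (g (n + 1) - g' (n + 1))
        have hCsplit : C = L₁ * D * Real.sqrt ((k₀ : ℝ) + 1) / b
            + L₀ * Real.sqrt ((k₀ : ℝ) + 1) / b := by rw [hC]; ring
        have step1 : c * Nm (g (n + 1) - g' (n + 1)) ≤ L₀ * Real.sqrt ((k₀ : ℝ) + 1) / b := by
          calc c * Nm (g (n + 1) - g' (n + 1)) ≤ c * (L₀ * ((k₀ : ℝ) + 1) / b) :=
                mul_le_mul_of_nonneg_left hgb hcpos.le
            _ = L₀ * (c * ((k₀ : ℝ) + 1)) / b := by ring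
            _ = L₀ * Real.sqrt ((k₀ : ℝ) + 1) / b := by rw [hck]
        have step2 : (1 - c) * Nm (Δ (n + 1) - Δ' (n + 1))
            ≤ L₁ * D * Real.sqrt ((k₀ : ℝ) + 1) / b := by
          have h1c : 1 - c ≤ 1 := by linarith
          have hrhsnn : 0 ≤ L₁ * D * Real.sqrt ((k₀ : ℝ) + 1) / b :=
            div_nonneg (mul_nonneg (mul_nonneg hL₁ hD) (Real.sqrt_nonneg _)) hb.le
          calc (1 - c) * Nm (Δ (n + 1) - Δ' (n + 1)) ≤ 1 * Nm (Δ (n + 1) - Δ' (n + 1)) :=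
                mul_le_mul_of_nonneg_right h1c hΔnn
            _ = Nm (Δ (n + 1) - Δ' (n + 1)) := one_mul _
            _ ≤ _ := hΔb
        calc Nm _ ≤ _ := hbnd
          _ = (1 - c) * Nm (Δ (n + 1) - Δ' (n + 1)) + c * Nm (g (n + 1) - g' (n + 1)) := by
              rw [e1, e2]
          _ ≤ C := by rw [hCsplit]; exact add_le_add step2 step1
      · -- n+1 > k₀ : contraction step
        have hne : n + 1 ≠ k₀ := by omega
        obtain ⟨hΔ, hg⟩ := hagree (n + 1) h1 h2 hne
        have hrw : nab (n + 1) - nab' (n + 1) = (1 - c) • (nab n - nab' n) := by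
          rw [hrec (n + 1) h1 h2, hrec' (n + 1) h1 h2]
          simp only [Nat.add_sub_cancel]
          rw [hΔ, hg, hc]
          push_cast
          module
        rw [hrw, hsm, abs_of_nonneg (by linarith)]
        have ihn : Nm (nab n - nab' n) ≤ C := ih (by omega) (by omega)
        have := hnn (nab n - nab' n)
        nlinarith
  -- conclude
  have hmt := main t hk₀ le_rfl
  have hsle : Real.sqrt ((k₀ : ℝ) + 1) ≤ Real.sqrt ((t : ℝ) + 1) := by
    apply Real.sqrt_le_sqrt
    have : (k₀ : ℝ) ≤ t := Nat.cast_le.mpr hk₀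
    linarith
  calc Nm (nab t - nab' t) ≤ C := hmt
    _ ≤ (L₀ + L₁ * D) * Real.sqrt ((t : ℝ) + 1) / b := by
      rw [hC, div_le_div_iff₀ hb hb]
      have hA : 0 ≤ L₀ + L₁ * D := add_nonneg hL₀ (mul_nonneg hL₁ hD)
      nlinarith [mul_le_mul_of_nonneg_left hsle hA]
end
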